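/- arXiv:2004.08088 — 2 statements merged into one kernel-verified Lean document; each statement's English description precedes it below -/
import Mathlib

section
/- Let Ω₁, Ω₂ ⊂ ℂ be bounded nonempty connected open sets, let (E_n) be a sequence of open subsets of Ω₁, and let φ : Ω₁ → Ω₂ be a quasiconformal homeomorphism. If there is c > 0 such that for every nonempty open set U ⊂ Ω₁ one has liminf_{n→∞} area(U ∩ E_n)/area(U) ≥ c, then for every nonempty open set U ⊂ Ω₂ one has liminf_{n→∞} area(U ∩ φ(E_n))/area(U) ≥ c. -/
open MeasureTheory Filter Set

/-- Density of `X` in `U` (planar Lebesgue measure), valued in `ℝ≥0∞`. -/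
noncomputable def dens (U X : Set ℂ) : ENNReal := volume (U ∩ X) / volume U

lemma aux_sum_liminf {ι : Type*} (s : Finset ι) (u : ι → ℕ → ENNReal) :
    ∑ i ∈ s, liminf (u i) atTop ≤ liminf (fun n => ∑ i ∈ s, u i n) atTop := by
  simp_rw [liminf_eq_iSup_iInf_of_nat]
  have hmono : ∀ i : ι, Monotone fun n : ℕ => ⨅ k, ⨅ _ : k ≥ n, u i k := by
    intro i n m hnm
    exact le_iInf₂ fun k hk => iInf₂_le k (hnm.trans hk)
  rw [ENNReal.finsetSum_iSup_of_monotone hmono]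
  exact iSup_mono fun n => le_iInf₂ fun k hk => Finset.sum_le_sum fun i _ => iInf₂_le k hk

theorem stmt_4
    (Ω₁ Ω₂ : Set ℂ)
    (hΩ₁open : IsOpen Ω₁) (hΩ₁bdd : Bornology.IsBounded Ω₁) (hΩ₁ne : Ω₁.Nonempty)
    (hΩ₁conn : IsConnected Ω₁)
    (hΩ₂open : IsOpen Ω₂) (hΩ₂bdd : Bornology.IsBounded Ω₂) (hΩ₂ne : Ω₂.Nonempty)
    (hΩ₂conn : IsConnected Ω₂)
    (E : ℕ → Set ℂ) (hE : ∀ n, IsOpen (E n) ∧ E n ⊆ Ω₁)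
    (φ : ℂ → ℂ)
    (hφcont : ContinuousOn φ Ω₁) (hφinj : InjOn φ Ω₁) (hφonto : φ '' Ω₁ = Ω₂)
    (hφinvcont : ContinuousOn (Function.invFunOn φ Ω₁) Ω₂)
    -- the Jacobian of the quasiconformal map φ and the change of variables formula
    (J : ℂ → ENNReal) (hJmeas : Measurable J) (hJpos : ∀ z ∈ Ω₁, 0 < J z)
    (hJloc : ∀ A : Set ℂ, MeasurableSet A → A ⊆ Ω₁ → ∫⁻ z in A, J z ∂volume = volume (φ '' A))
    (c : ℝ) (hc : 0 < c)
    (hdens : ∀ U : Set ℂ, IsOpen U → U.Nonempty → U ⊆ Ω₁ →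
      ENNReal.ofReal c ≤ liminf (fun n => dens U (E n)) atTop) :
    ∀ U : Set ℂ, IsOpen U → U.Nonempty → U ⊆ Ω₂ →
      ENNReal.ofReal c ≤ liminf (fun n => dens U (φ '' E n)) atTop := by
  -- Step 1: density lower bound for all measurable subsets of Ω₁
  have keyA : ∀ A : Set ℂ, MeasurableSet A → A ⊆ Ω₁ →
      ENNReal.ofReal c * volume A ≤ liminf (fun n => volume (A ∩ E n)) atTop := by
    intro A hAmeas hAsub
    rcases eq_or_ne (volume A) 0 with hA0 | hA0
    · simp [hA0]
    have hAfin : volume A ≠ ⊤ := ((measure_mono hAsub).trans_lt hΩ₁bdd.measure_lt_top).ne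
    refine ENNReal.le_of_forall_pos_le_add fun ε hε _ => ?_
    obtain ⟨W₀, hAW₀, hW₀open, hW₀lt⟩ := Set.exists_isOpen_lt_add A hAfin
      (by exact_mod_cast hε.ne' : (ε : ENNReal) ≠ 0)
    set W := W₀ ∩ Ω₁ with hWdef
    have hWopen : IsOpen W := hW₀open.inter hΩ₁open
    have hAW : A ⊆ W := subset_inter hAW₀ hAsub
    have hWsub : W ⊆ Ω₁ := inter_subset_right
    have hWne : W.Nonempty := (nonempty_of_measure_ne_zero hA0).mono hAW
    have hWfin : volume W ≠ ⊤ := ((measure_mono hWsub).trans_lt hΩ₁bdd.measure_lt_top).ne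
    have hW0 : volume W ≠ 0 := fun h =>
      hA0 (le_antisymm (h ▸ measure_mono hAW) zero_le)
    have h1 : ENNReal.ofReal c * volume W ≤ liminf (fun n => volume (W ∩ E n)) atTop := by
      have h2 := hdens W hWopen hWne hWsub
      calc ENNReal.ofReal c * volume W
          ≤ liminf (fun n => dens W (E n)) atTop * volume W := mul_le_mul_left h2 _
        _ = liminf (fun n => dens W (E n)) atTop * liminf (fun _ : ℕ => volume W) atTop := by
            rw [liminf_const]
        _ ≤ liminf ((fun n => dens W (E n)) * fun _ : ℕ => volume W) atTop :=
            ENNReal.le_liminf_mul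
        _ = liminf (fun n => volume (W ∩ E n)) atTop := by
            congr 1
            funext n
            simp only [Pi.mul_apply, dens]
            rw [ENNReal.div_mul_cancel hW0 hWfin]
    have hdiff : volume (W \ A) ≤ (ε : ENNReal) := by
      rw [measure_diff hAW hAmeas.nullMeasurableSet hAfin]
      refine tsub_le_iff_left.mpr ?_
      calc volume W ≤ volume W₀ := measure_mono inter_subset_left
        _ ≤ volume A + ε := hW₀lt.le
    have hpt : ∀ n, volume (W ∩ E n) ≤ volume (A ∩ E n) + ε := by
      intro n
      have hsub : W ∩ E n ⊆ (A ∩ E n) ∪ (W \ A) := by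
        intro x hx
        by_cases hxA : x ∈ A
        · exact Or.inl ⟨hxA, hx.2⟩
        · exact Or.inr ⟨hx.1, hxA⟩
      calc volume (W ∩ E n) ≤ volume ((A ∩ E n) ∪ (W \ A)) := measure_mono hsub
        _ ≤ volume (A ∩ E n) + volume (W \ A) := measure_union_le _ _
        _ ≤ volume (A ∩ E n) + ε := add_le_add_right hdiff _
    calc ENNReal.ofReal c * volume A
        ≤ ENNReal.ofReal c * volume W := mul_le_mul_right (measure_mono hAW) _
      _ ≤ liminf (fun n => volume (W ∩ E n)) atTop := h1
      _ ≤ liminf (fun n => volume (A ∩ E n) + ε) atTop :=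
          liminf_le_liminf (Eventually.of_forall hpt)
      _ = liminf (fun n => volume (A ∩ E n)) atTop + ε :=
          liminf_add_const atTop (fun n => volume (A ∩ E n)) (ε : ENNReal)
            (by isBoundedDefault) (by isBoundedDefault)
  -- Step 2: main argument
  intro U hUopen hUne hUsub
  set V := Ω₁ ∩ φ ⁻¹' U with hVdef
  have hVopen : IsOpen V := hφcont.isOpen_inter_preimage hΩ₁open hUopen
  have hVsub : V ⊆ Ω₁ := inter_subset_left
  have hVmeas : MeasurableSet V := hVopen.measurableSet
  have himgV : φ '' V = U := by
    rw [hVdef, Set.image_inter_preimage, hφonto, inter_eq_self_of_subset_right hUsub]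
  have hvolU : volume U = ∫⁻ z in V, J z := by rw [hJloc V hVmeas hVsub, himgV]
  have hUvol0 : volume U ≠ 0 := (hUopen.measure_pos volume hUne).ne'
  have hUvolfin : volume U ≠ ⊤ := ((measure_mono hUsub).trans_lt hΩ₂bdd.measure_lt_top).ne
  have hVn : ∀ n, φ '' (V ∩ E n) = U ∩ φ '' E n := by
    intro n
    have h1 : V ∩ E n = E n ∩ φ ⁻¹' U := by
      ext x
      simp only [hVdef, mem_inter_iff, mem_preimage]
      exact ⟨fun h => ⟨h.2, h.1.2⟩, fun h => ⟨⟨(hE n).2 h.1, h.2⟩, h.1⟩⟩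
    rw [h1, Set.image_inter_preimage, inter_comm]
  have hdensEq : ∀ n, dens U (φ '' E n) = (∫⁻ z in V ∩ E n, J z) / volume U := by
    intro n
    simp only [dens]
    congr 1
    rw [hJloc (V ∩ E n) (hVmeas.inter (hE n).1.measurableSet)
      (inter_subset_left.trans hVsub), hVn n]
  -- Step 2a: lower bound for the liminf of Jacobian integrals
  have keyB : ENNReal.ofReal c * volume U ≤
      liminf (fun n => ∫⁻ z in V ∩ E n, J z) atTop := by
    rw [hvolU, MeasureTheory.lintegral_def, ENNReal.mul_iSup]
    refine iSup_le fun g => ?_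
    rw [ENNReal.mul_iSup]
    refine iSup_le fun hg => ?_
    have hgl : g.lintegral (volume.restrict V)
        = ∑ y ∈ g.range, y * volume (g ⁻¹' {y} ∩ V) := by
      rw [SimpleFunc.lintegral]
      refine Finset.sum_congr rfl fun y _ => ?_
      rw [Measure.restrict_apply (g.measurableSet_fiber y)]
    rw [hgl, Finset.mul_sum]
    have hbound : ∀ n, ∑ y ∈ g.range, y * volume ((g ⁻¹' {y} ∩ V) ∩ E n)
        ≤ ∫⁻ z in V ∩ E n, J z := by
      intro n
      have h2 : (∫⁻ z in V ∩ E n, g z) ≤ ∫⁻ z in V ∩ E n, J z := lintegral_mono hg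
      refine le_trans (le_of_eq ?_) h2
      have h3 : (∫⁻ z in V ∩ E n, g z) = g.lintegral (volume.restrict (V ∩ E n)) :=
        SimpleFunc.lintegral_eq_lintegral g _
      rw [h3, SimpleFunc.lintegral]
      refine Finset.sum_congr rfl fun y _ => ?_
      rw [Measure.restrict_apply (g.measurableSet_fiber y), inter_assoc]
    have perterm : ∀ y ∈ g.range,
        ENNReal.ofReal c * (y * volume (g ⁻¹' {y} ∩ V))
          ≤ liminf (fun n => y * volume ((g ⁻¹' {y} ∩ V) ∩ E n)) atTop := by
      intro y _
      have hA := keyA (g ⁻¹' {y} ∩ V) ((g.measurableSet_fiber y).inter hVmeas)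
        (inter_subset_right.trans hVsub)
      calc ENNReal.ofReal c * (y * volume (g ⁻¹' {y} ∩ V))
          = y * (ENNReal.ofReal c * volume (g ⁻¹' {y} ∩ V)) := by ring
        _ ≤ y * liminf (fun n => volume ((g ⁻¹' {y} ∩ V) ∩ E n)) atTop :=
            mul_le_mul_right hA y
        _ = liminf (fun _ : ℕ => y) atTop
              * liminf (fun n => volume ((g ⁻¹' {y} ∩ V) ∩ E n)) atTop := by
            rw [liminf_const]
        _ ≤ liminf ((fun _ : ℕ => y) * fun n => volume ((g ⁻¹' {y} ∩ V) ∩ E n)) atTop :=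
            ENNReal.le_liminf_mul
        _ = liminf (fun n => y * volume ((g ⁻¹' {y} ∩ V) ∩ E n)) atTop := rfl
    calc ∑ y ∈ g.range, ENNReal.ofReal c * (y * volume (g ⁻¹' {y} ∩ V))
        ≤ ∑ y ∈ g.range, liminf (fun n => y * volume ((g ⁻¹' {y} ∩ V) ∩ E n)) atTop :=
          Finset.sum_le_sum perterm
      _ ≤ liminf (fun n => ∑ y ∈ g.range, y * volume ((g ⁻¹' {y} ∩ V) ∩ E n)) atTop :=
          aux_sum_liminf _ _
      _ ≤ liminf (fun n => ∫⁻ z in V ∩ E n, J z) atTop :=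
          liminf_le_liminf (Eventually.of_forall hbound)
  -- Step 2b: conclude
  calc ENNReal.ofReal c
      ≤ liminf (fun n => ∫⁻ z in V ∩ E n, J z) atTop / volume U := by
        rw [ENNReal.le_div_iff_mul_le (Or.inl hUvol0) (Or.inl hUvolfin)]
        exact keyB
    _ = liminf (fun n => ∫⁻ z in V ∩ E n, J z) atTop
          * liminf (fun _ : ℕ => (volume U)⁻¹) atTop := by
        rw [liminf_const, div_eq_mul_inv]
    _ ≤ liminf ((fun n => ∫⁻ z in V ∩ E n, J z) * fun _ : ℕ => (volume U)⁻¹) atTop :=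
        ENNReal.le_liminf_mul
    _ = liminf (fun n => dens U (φ '' E n)) atTop := by
        congr 1
        funext n
        rw [Pi.mul_apply, hdensEq n, div_eq_mul_inv]
end

section
/- Let g : ℂ → ℂ be a polynomial of degree 3. If g has an attracting fixed point z₀ (|g'(z₀)| < 1, g'(z₀) ≠ 0) and a disjoint attracting periodic cycle of period q ≥ 1, then g has at least two distinct critical points in ℂ whose forward orbits are infinite (not eventually periodic); in particular g has two distinct critical points c, c' with g^n(c) → z₀ under iteration and g^{nq}(c') converging to a point of the cycle. -/
open Polynomial Filter Metric Set

namespace Fatou15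

/-- An entire function has continuous derivative. -/
lemma continuous_deriv_entire {f : ℂ → ℂ} (hf : Differentiable ℂ f) :
    Continuous (deriv f) :=
  (hf.contDiff (n := 2)).continuous_deriv (by norm_num)

lemma hasStrictDerivAt_entire {f : ℂ → ℂ} (hf : Differentiable ℂ f) (p : ℂ) :
    HasStrictDerivAt f (deriv f p) p :=
  (hf.contDiff (n := 1)).contDiffAt.hasStrictDerivAt one_ne_zero

/-- Local holomorphic section of an entire function at a noncritical point. -/
lemma loc_inv {f : ℂ → ℂ} (hf : Differentiable ℂ f) {p : ℂ} (hp : deriv f p ≠ 0) :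
    ∃ (V U : Set ℂ) (σ : ℂ → ℂ), IsOpen V ∧ IsOpen U ∧ p ∈ V ∧ f p ∈ U ∧
      Set.InjOn f V ∧ (∀ y ∈ U, σ y ∈ V) ∧ (∀ y ∈ U, f (σ y) = y) ∧
      σ (f p) = p ∧ DifferentiableOn ℂ σ U ∧ (∀ z ∈ V, deriv f z ≠ 0) := by
  have hs := (hasStrictDerivAt_entire hf p).hasStrictFDerivAt_equiv hp
  set Φ := hs.toOpenPartialHomeomorph f with hΦ
  have hcoe : (Φ : ℂ → ℂ) = f := hs.toOpenPartialHomeomorph_coe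
  have hpsrc : p ∈ Φ.source := hs.mem_toOpenPartialHomeomorph_source
  have hD : IsOpen {z : ℂ | deriv f z ≠ 0} :=
    isOpen_ne.preimage (continuous_deriv_entire hf)
  set V := Φ.source ∩ {z : ℂ | deriv f z ≠ 0} with hV
  have hVopen : IsOpen V := Φ.open_source.inter hD
  have hpV : p ∈ V := ⟨hpsrc, hp⟩
  set U := Φ.target ∩ Φ.symm ⁻¹' V with hU
  have hUopen : IsOpen U :=
    Φ.continuousOn_symm.isOpen_inter_preimage Φ.open_target hVopen
  refine ⟨V, U, Φ.symm, hVopen, hUopen, hpV, ?_, ?_, ?_, ?_, ?_, ?_, fun z hz => hz.2⟩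
  · refine ⟨?_, ?_⟩
    · have := Φ.map_source hpsrc
      rwa [hcoe] at this
    · have h1 : Φ.symm (Φ p) = p := Φ.left_inv hpsrc
      have h2 : Φ p = f p := by rw [← hcoe]
      simp only [mem_preimage]
      rw [← h2, h1]; exact hpV
  · have hinj : Set.InjOn Φ Φ.source := Φ.injOn
    rw [hcoe] at hinj
    exact hinj.mono inter_subset_left
  · intro y hy; exact hy.2
  · intro y hy
    have := Φ.right_inv hy.1
    rwa [hcoe] at this
  · have h1 : Φ.symm (Φ p) = p := Φ.left_inv hpsrc
    have h2 : Φ p = f p := by rw [← hcoe]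
    rw [← h2, h1]
  · intro y hy
    have hy' : y ∈ Φ.target := hy.1
    have hcont : ContinuousAt Φ.symm y := Φ.continuousAt_symm hy'
    have hdnz : deriv f (Φ.symm y) ≠ 0 := (hy.2 : Φ.symm y ∈ V).2
    have hder : HasDerivAt f (deriv f (Φ.symm y)) (Φ.symm y) :=
      (hf (Φ.symm y)).hasDerivAt
    have hev : ∀ᶠ y' in nhds y, f (Φ.symm y') = y' := by
      filter_upwards [hUopen.mem_nhds hy] with y' hy'
      have := Φ.right_inv hy'.1
      rwa [hcoe] at this
    exact ((hder.of_local_left_inverse hcont hdnz hev).differentiableAt).differentiableWithinAt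

/-- Uniqueness (clopen) principle for continuous sections of an entire map over `F`. -/
lemma sections_eqOn {f : ℂ → ℂ} (hf : Differentiable ℂ f) {S : Set ℂ} (hS : IsOpen S)
    (hconn : IsPreconnected S) {F v₁ v₂ : ℂ → ℂ}
    (h₁ : ContinuousOn v₁ S) (h₂ : ContinuousOn v₂ S)
    (hs₁ : ∀ z ∈ S, f (v₁ z) = F z) (hs₂ : ∀ z ∈ S, f (v₂ z) = F z)
    (hnc : ∀ z ∈ S, deriv f (v₁ z) ≠ 0)
    {z₀ : ℂ} (hz₀ : z₀ ∈ S) (hagree : v₁ z₀ = v₂ z₀) : Set.EqOn v₁ v₂ S := by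
  set E := {z : ℂ | z ∈ S ∧ v₁ z = v₂ z} with hE
  have hEopen : IsOpen E := by
    rw [isOpen_iff_mem_nhds]
    rintro z ⟨hzS, hzeq⟩
    obtain ⟨V, U, σ, hVopen, hUopen, hpV, -, hinj, -, -, -, -, -⟩ :=
      loc_inv hf (hnc z hzS)
    have hN1 : IsOpen (S ∩ v₁ ⁻¹' V) := h₁.isOpen_inter_preimage hS hVopen
    have hN2 : IsOpen (S ∩ v₂ ⁻¹' V) := h₂.isOpen_inter_preimage hS hVopen
    have hzN : z ∈ (S ∩ v₁ ⁻¹' V) ∩ (S ∩ v₂ ⁻¹' V) := by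
      refine ⟨⟨hzS, hpV⟩, ⟨hzS, ?_⟩⟩
      simpa [mem_preimage, ← hzeq] using hpV
    filter_upwards [(hN1.inter hN2).mem_nhds hzN] with z' hz'
    refine ⟨hz'.1.1, hinj hz'.1.2 hz'.2.2 ?_⟩
    rw [hs₁ z' hz'.1.1, hs₂ z' hz'.2.1]
  have hOopen : IsOpen {z : ℂ | z ∈ S ∧ v₁ z ≠ v₂ z} := by
    have : {z : ℂ | z ∈ S ∧ v₁ z ≠ v₂ z} = S ∩ (fun z => v₁ z - v₂ z) ⁻¹' ({0}ᶜ) := by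
      ext z; simp [sub_eq_zero]
    rw [this]
    exact (h₁.sub h₂).isOpen_inter_preimage hS isOpen_compl_singleton
  intro z hz
  by_contra hne
  have hcover : S ⊆ E ∪ {z : ℂ | z ∈ S ∧ v₁ z ≠ v₂ z} := by
    intro y hy
    by_cases h : v₁ y = v₂ y
    · exact Or.inl ⟨hy, h⟩
    · exact Or.inr ⟨hy, h⟩
  obtain ⟨y, -, hy1, hy2⟩ :=
    hconn E _ hEopen hOopen hcover ⟨z₀, hz₀, hz₀, hagree⟩ ⟨z, hz, hz, hne⟩
  exact hy2.2 hy1.2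


/-- A holomorphic section of `f` over `F` on `ball a r`, anchored at `a ↦ e₀`. -/
def IsSec (f F : ℂ → ℂ) (a e₀ : ℂ) (r : ℝ) (v : ℂ → ℂ) : Prop :=
  DifferentiableOn ℂ v (ball a r) ∧ (∀ x ∈ ball a r, f (v x) = F x) ∧ v a = e₀

lemma ext_boundary {f F : ℂ → ℂ} {a e₀ : ℂ} {ρ : ℝ} (hf : Differentiable ℂ f)
    (hb : ∀ K : ℝ, ∃ R : ℝ, ∀ z : ℂ, R ≤ ‖z‖ → K ≤ ‖f z‖)
    (hF : DifferentiableOn ℂ F (ball a ρ))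
    (hcrit : ∀ y ∈ ball a ρ, y ≠ a → ∀ z : ℂ, f z = F y → deriv f z ≠ 0)
    {r : ℝ} (hr0 : 0 < r) (hrρ : r < ρ) {v : ℂ → ℂ} (hv : IsSec f F a e₀ r v)
    {x : ℂ} (hx : dist x a = r) :
    ∃ δ : ℝ, 0 < δ ∧ δ ≤ r ∧ ball x δ ⊆ ball a ρ ∧ ∃ e : ℂ → ℂ,
      DifferentiableOn ℂ e (ball x δ) ∧ (∀ y ∈ ball x δ, f (e y) = F y) ∧
      (∀ y ∈ ball x δ, deriv f (e y) ≠ 0) ∧ Set.EqOn v e (ball x δ ∩ ball a r) := by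
  have hxρ : x ∈ ball a ρ := by simp [mem_ball, hx, hrρ]
  have hxa : x ≠ a := by
    intro h; rw [h, dist_self] at hx; exact hr0.ne' hx.symm
  -- uniform bound on values of v
  obtain ⟨C, hC⟩ := (isCompact_closedBall a r).exists_bound_of_continuousOn
    (hF.continuousOn.mono (fun z hz =>
      mem_ball.mpr (lt_of_le_of_lt (mem_closedBall.mp hz) hrρ)))
  obtain ⟨R, hR⟩ := hb (C + 1)
  have hvb : ∀ y ∈ ball a r, ‖v y‖ < R := by
    intro y hy
    by_contra hcon
    push_neg at hcon
    have h1 : C + 1 ≤ ‖f (v y)‖ := hR _ hcon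
    rw [hv.2.1 y hy] at h1
    have h2 : ‖F y‖ ≤ C := hC y (ball_subset_closedBall hy)
    linarith
  -- the radial sequence
  set y : ℕ → ℂ := fun k => a + (((k : ℝ) + 1) / ((k : ℝ) + 2)) • (x - a) with hy
  have hknum : ∀ k : ℕ, (0:ℝ) < (k : ℝ) + 2 := fun k => by positivity
  have hyd : ∀ k, dist (y k) a = (((k : ℝ) + 1) / ((k : ℝ) + 2)) * r := by
    intro k
    rw [hy]
    simp only [dist_eq_norm, add_sub_cancel_left, norm_smul, Real.norm_eq_abs]
    rw [abs_of_nonneg (by positivity), ← dist_eq_norm, hx]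
  have hymem : ∀ k, y k ∈ ball a r := by
    intro k
    rw [mem_ball, hyd k]
    have : ((k : ℝ) + 1) / ((k : ℝ) + 2) < 1 := by
      rw [div_lt_one (hknum k)]; linarith
    nlinarith
  have hydx : ∀ k, dist (y k) x = r / ((k : ℝ) + 2) := by
    intro k
    have : y k - x = ((((k : ℝ) + 1) / ((k : ℝ) + 2)) - 1) • (x - a) := by
      rw [hy]; module
    rw [dist_eq_norm, this, norm_smul, Real.norm_eq_abs, ← dist_eq_norm, hx]
    have h1 : (((k : ℝ) + 1) / ((k : ℝ) + 2)) - 1 = -(1 / ((k : ℝ) + 2)) := by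
      field_simp
      norm_num
    rw [h1, abs_neg, abs_of_nonneg (by positivity)]
    rw [one_div, inv_mul_eq_div]
  have hytend : Tendsto y atTop (nhds x) := by
    rw [tendsto_iff_dist_tendsto_zero]
    have h2 : Tendsto (fun k : ℕ => r / ((k : ℝ) + 2)) atTop (nhds 0) := by
      apply Tendsto.div_atTop (tendsto_const_nhds)
      exact tendsto_atTop_add_const_right atTop 2 tendsto_natCast_atTop_atTop
    simpa only [hydx] using h2
  -- accumulation point of v along the sequence
  have hbdd : ∀ k, v (y k) ∈ closedBall (0 : ℂ) R := by
    intro k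
    rw [mem_closedBall, dist_zero_right]
    exact (hvb _ (hymem k)).le
  obtain ⟨estar, -, φ, hφ, hlim⟩ :=
    tendsto_subseq_of_bounded (isBounded_closedBall (x := (0:ℂ)) (r := R)) hbdd
  have hFcx : ContinuousAt F x := hF.continuousOn.continuousAt (isOpen_ball.mem_nhds hxρ)
  have hfe : f estar = F x := by
    have h1 : Tendsto (fun j => f (v (y (φ j)))) atTop (nhds (f estar)) :=
      (hf.continuous.tendsto estar).comp hlim
    have h2 : (fun j => f (v (y (φ j)))) = fun j => F (y (φ j)) := by
      funext j; exact hv.2.1 _ (hymem _)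
    rw [h2] at h1
    have h3 : Tendsto (fun j => F (y (φ j))) atTop (nhds (F x)) :=
      hFcx.tendsto.comp (hytend.comp hφ.tendsto_atTop)
    exact tendsto_nhds_unique h1 h3
  have hnce : deriv f estar ≠ 0 := hcrit x hxρ hxa estar hfe
  obtain ⟨V, U, σ, hVopen, hUopen, heV, heU, hinj, hσV, hσsec, hσe, hσdiff, hVnc⟩ :=
    loc_inv hf hnce
  -- choose δ
  have hFU : F ⁻¹' U ∈ nhds x := hFcx.preimage_mem_nhds (hUopen.mem_nhds (hfe ▸ heU))
  obtain ⟨δ₁, hδ₁pos, hδ₁⟩ := Metric.mem_nhds_iff.mp hFU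
  set δ := min δ₁ (min r (ρ - r)) with hδ
  have hδpos : 0 < δ := lt_min hδ₁pos (lt_min hr0 (by linarith))
  have hδr : δ ≤ r := le_trans (min_le_right _ _) (min_le_left _ _)
  have hδsub : ball x δ ⊆ ball a ρ := by
    intro z hz
    rw [mem_ball] at hz ⊢
    have h1 : dist z a ≤ dist z x + dist x a := dist_triangle _ _ _
    have h2 : δ ≤ ρ - r := le_trans (min_le_right _ _) (min_le_right _ _)
    rw [hx] at h1; linarith
  have hδU : ∀ z ∈ ball x δ, F z ∈ U := fun z hz =>
    hδ₁ (ball_subset_ball (min_le_left _ _) hz)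
  refine ⟨δ, hδpos, hδr, hδsub, σ ∘ F, ?_, ?_, ?_, ?_⟩
  · exact hσdiff.comp (hF.mono hδsub) (fun z hz => hδU z hz)
  · exact fun z hz => hσsec _ (hδU z hz)
  · exact fun z hz => hVnc _ (hσV _ (hδU z hz))
  · -- EqOn on the overlap
    have hSopen : IsOpen (ball x δ ∩ ball a r) := isOpen_ball.inter isOpen_ball
    have hSconn : IsPreconnected (ball x δ ∩ ball a r) :=
      ((convex_ball x δ).inter (convex_ball a r)).isPreconnected
    -- find agreement point
    have hev1 : ∀ᶠ j in atTop, y (φ j) ∈ ball x δ :=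
      (hytend.comp hφ.tendsto_atTop).eventually_mem (isOpen_ball.mem_nhds (mem_ball_self hδpos))
    have hev2 : ∀ᶠ j in atTop, v (y (φ j)) ∈ V :=
      hlim.eventually_mem (hVopen.mem_nhds heV)
    obtain ⟨j, hj1, hj2⟩ := (hev1.and hev2).exists
    set z₀ := y (φ j) with hz₀
    have hz₀S : z₀ ∈ ball x δ ∩ ball a r := ⟨hj1, hymem _⟩
    have hagree : v z₀ = (σ ∘ F) z₀ := by
      apply hinj hj2 (hσV _ (hδU _ hj1))
      rw [hv.2.1 _ (hymem _), hσsec _ (hδU _ hj1)]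
    intro z hz
    refine sections_eqOn hf hSopen hSconn
      (hv.1.continuousOn.mono inter_subset_right)
      ((hσdiff.comp (hF.mono hδsub) (fun w hw => hδU w hw)).continuousOn.mono
        inter_subset_left)
      (fun w hw => hv.2.1 w hw.2)
      (fun w hw => hσsec _ (hδU w hw.1))
      ?_ hz₀S hagree hz
    · -- noncriticality of v on the overlap
      intro w hw
      have hwa : w ≠ a := by
        intro h
        rw [h] at hw
        have : dist a x < δ := mem_ball.mp hw.1
        rw [dist_comm] at this
        rw [hx] at this
        linarith [hδr, this]
      exact hcrit w (ball_subset_ball hrρ.le hw.2) hwa _ (hv.2.1 w hw.2)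


/-- Extension of the maximal radius: an anchored section on `ball a r` (with `r < ρ`)
extends to a strictly larger ball. -/
lemma ext_radius {f F : ℂ → ℂ} {a e₀ : ℂ} {ρ : ℝ} (hf : Differentiable ℂ f)
    (hb : ∀ K : ℝ, ∃ R : ℝ, ∀ z : ℂ, R ≤ ‖z‖ → K ≤ ‖f z‖)
    (hF : DifferentiableOn ℂ F (ball a ρ))
    (hcrit : ∀ y ∈ ball a ρ, y ≠ a → ∀ z : ℂ, f z = F y → deriv f z ≠ 0)
    {r : ℝ} (hr0 : 0 < r) (hrρ : r < ρ) {v : ℂ → ℂ} (hv : IsSec f F a e₀ r v) :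
    ∃ ε : ℝ, 0 < ε ∧ ∃ v' : ℂ → ℂ, IsSec f F a e₀ (r + ε) v' := by
  classical
  have H : ∀ x ∈ sphere a r,
      ∃ δ : ℝ, (0 < δ ∧ δ ≤ r ∧ ball x δ ⊆ ball a ρ) ∧ ∃ e : ℂ → ℂ,
      DifferentiableOn ℂ e (ball x δ) ∧ (∀ y ∈ ball x δ, f (e y) = F y) ∧
      (∀ y ∈ ball x δ, deriv f (e y) ≠ 0) ∧ Set.EqOn v e (ball x δ ∩ ball a r) := by
    intro x hx
    obtain ⟨δ, h1, h2, h3, e, h4, h5, h6, h7⟩ :=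
      ext_boundary hf hb hF hcrit hr0 hrρ hv (mem_sphere.mp hx)
    exact ⟨δ, ⟨h1, h2, h3⟩, e, h4, h5, h6, h7⟩
  choose! δ hδ e hediff hesec henc heeq using H
  -- finite subcover of the sphere
  have hcov : sphere a r ⊆ ⋃ x ∈ sphere a r, ball x (δ x / 4) := by
    intro x hx
    exact mem_biUnion hx (mem_ball_self (by linarith [(hδ x hx).1]))
  obtain ⟨t, hts, htfin, htcov⟩ :=
    (isCompact_sphere a r).elim_finite_subcover_image
      (fun x _ => isOpen_ball) hcov
  have htne : t.Nonempty := by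
    obtain ⟨x₀, hx₀⟩ : (sphere a r).Nonempty := NormedSpace.sphere_nonempty.mpr hr0.le
    obtain ⟨x, hx, hxx⟩ := mem_iUnion₂.mp (htcov hx₀)
    exact ⟨x, hx⟩
  -- minimal radius
  set tf := htfin.toFinset with htf
  have htfne : tf.Nonempty := by
    rwa [htf, Set.Finite.toFinset_nonempty]
  set ε : ℝ := tf.inf' htfne δ with hε
  have hεpos : 0 < ε := by
    rw [hε, Finset.lt_inf'_iff]
    intro x hx
    exact (hδ x (hts (htfin.mem_toFinset.mp hx))).1
  have hεle : ∀ x ∈ t, ε ≤ δ x := by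
    intro x hx
    exact Finset.inf'_le _ (htfin.mem_toFinset.mpr hx)
  set ε' : ℝ := min (min (ε / 8) ((ρ - r) / 2)) (r / 4) with hε'
  have hε'pos : 0 < ε' := by
    apply lt_min (lt_min (by linarith) (by linarith)) (by linarith)
  have hε'ε : ε' ≤ ε / 8 := le_trans (min_le_left _ _) (min_le_left _ _)
  have hε'ρ : ε' ≤ (ρ - r) / 2 := le_trans (min_le_left _ _) (min_le_right _ _)
  have hε'r : ε' ≤ r / 4 := min_le_right _ _
  -- the cover claim
  have hC1 : ∀ y : ℂ, r - 2 * ε' ≤ dist y a → dist y a < r + ε' →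
      ∃ x ∈ t, y ∈ ball x (δ x / 2) := by
    intro y hy1 hy2
    have hd0 : 0 < dist y a := by linarith
    set P := a + (r / dist y a) • (y - a) with hP
    have hPa : dist P a = r := by
      rw [hP, dist_eq_norm, add_sub_cancel_left, norm_smul, Real.norm_eq_abs,
        abs_of_nonneg (by positivity), ← dist_eq_norm]
      field_simp
    have hyP : dist y P = |dist y a - r| := by
      have h1 : y - P = (1 - r / dist y a) • (y - a) := by
        rw [hP]; module
      rw [dist_eq_norm, h1, norm_smul, Real.norm_eq_abs, ← dist_eq_norm]
      rw [abs_sub_comm (dist y a) r]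
      rw [show |1 - r / dist y a| = |(dist y a - r) / dist y a| by
        congr 1; field_simp]
      rw [abs_div, abs_of_pos hd0]
      field_simp
      exact abs_sub_comm _ _
    have hyP2 : dist y P ≤ 2 * ε' := by
      rw [hyP, abs_le]
      constructor <;> linarith
    obtain ⟨x, hx, hxP⟩ := mem_iUnion₂.mp (htcov (mem_sphere.mpr hPa))
    refine ⟨x, hx, ?_⟩
    rw [mem_ball] at hxP ⊢
    have h2 : dist y x ≤ dist y P + dist P x := dist_triangle _ _ _
    have h3 : ε ≤ δ x := hεle x hx
    have : 2 * ε' ≤ δ x / 4 := by linarith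
    linarith
  -- EqOn v (e x) is known on ball x (δ x) ∩ ball a r; pairwise agreement:
  have hC3 : ∀ x₁ ∈ t, ∀ x₂ ∈ t, ∀ y : ℂ,
      y ∈ ball x₁ (3 * δ x₁ / 4) → y ∈ ball x₂ (3 * δ x₂ / 4) →
      dist y a < r + ε' → e x₁ y = e x₂ y := by
    intro x₁ hx₁ x₂ hx₂ y hy1 hy2 hya
    have hx₁s := hts hx₁
    have hx₂s := hts hx₂
    have hδ₁ := hδ x₁ hx₁s
    have hδ₂ := hδ x₂ hx₂s
    have hεδ₁ : ε ≤ δ x₁ := hεle x₁ hx₁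
    have hεδ₂ : ε ≤ δ x₂ := hεle x₂ hx₂
    by_cases hcase : dist y a ≤ r - ε'
    · -- y is well inside ball a r
      have hyr : y ∈ ball a r := mem_ball.mpr (by linarith)
      have h1 := heeq x₁ hx₁s ⟨ball_subset_ball (by linarith) hy1, hyr⟩
      have h2 := heeq x₂ hx₂s ⟨ball_subset_ball (by linarith) hy2, hyr⟩
      rw [← h1, ← h2]
    · push_neg at hcase
      have hd0 : 0 < dist y a := by linarith
      set u := a + ((r - ε') / dist y a) • (y - a) with hu
      have hua : dist u a = r - ε' := by
        rw [hu, dist_eq_norm, add_sub_cancel_left, norm_smul, Real.norm_eq_abs,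
          abs_of_nonneg (div_nonneg (by linarith) hd0.le), ← dist_eq_norm]
        field_simp
      have hyu : dist y u = dist y a - (r - ε') := by
        have h1 : y - u = (1 - (r - ε') / dist y a) • (y - a) := by
          rw [hu]; module
        rw [dist_eq_norm, h1, norm_smul, Real.norm_eq_abs, ← dist_eq_norm]
        rw [show |1 - (r - ε') / dist y a| = |(dist y a - (r - ε')) / dist y a| by
          congr 1; field_simp]
        rw [abs_div, abs_of_pos hd0, abs_of_nonneg (by linarith)]
        field_simp
      have hyu2 : dist y u ≤ 2 * ε' := by rw [hyu]; linarith
      have hu₁ : u ∈ ball x₁ (δ x₁) := by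
        rw [mem_ball]
        have := dist_triangle u y x₁
        rw [dist_comm u y] at this
        rw [mem_ball] at hy1
        have : dist u x₁ ≤ dist y u + dist y x₁ := this
        have h8 : 2 * ε' ≤ δ x₁ / 4 := by linarith
        linarith
      have hu₂ : u ∈ ball x₂ (δ x₂) := by
        rw [mem_ball]
        have := dist_triangle u y x₂
        rw [dist_comm u y] at this
        rw [mem_ball] at hy2
        have h8 : 2 * ε' ≤ δ x₂ / 4 := by linarith
        linarith
      have hur : u ∈ ball a r := mem_ball.mpr (by rw [hua]; linarith)
      have huag : e x₁ u = e x₂ u := by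
        rw [← heeq x₁ hx₁s ⟨hu₁, hur⟩, ← heeq x₂ hx₂s ⟨hu₂, hur⟩]
      -- now propagate agreement from u to y on the convex overlap
      set W := ball x₁ (δ x₁) ∩ ball x₂ (δ x₂) ∩ ball a (r + ε') with hW
      have hWopen : IsOpen W := (isOpen_ball.inter isOpen_ball).inter isOpen_ball
      have hWconn : IsPreconnected W :=
        (((convex_ball x₁ (δ x₁)).inter (convex_ball x₂ (δ x₂))).inter
          (convex_ball a (r + ε'))).isPreconnected
      have huW : u ∈ W := ⟨⟨hu₁, hu₂⟩, mem_ball.mpr (by rw [hua]; linarith)⟩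
      have hyW : y ∈ W := ⟨⟨ball_subset_ball (by linarith) hy1,
        ball_subset_ball (by linarith) hy2⟩, mem_ball.mpr hya⟩
      exact sections_eqOn hf hWopen hWconn
        ((hediff x₁ hx₁s).continuousOn.mono
          (fun w hw => hw.1.1))
        ((hediff x₂ hx₂s).continuousOn.mono
          (fun w hw => hw.1.2))
        (fun w hw => hesec x₁ hx₁s w hw.1.1)
        (fun w hw => hesec x₂ hx₂s w hw.1.2)
        (fun w hw => henc x₁ hx₁s w hw.1.1)
        huW huag hyW
  -- the glued function
  set ch : ℂ → ℂ := fun y =>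
    if h : ∃ x ∈ t, y ∈ ball x (δ x / 2) then h.choose else a with hch
  have hchspec : ∀ y : ℂ, (∃ x ∈ t, y ∈ ball x (δ x / 2)) →
      ch y ∈ t ∧ y ∈ ball (ch y) (δ (ch y) / 2) := by
    intro y hy
    rw [hch]
    simp only [dif_pos hy]
    exact ⟨hy.choose_spec.1, hy.choose_spec.2⟩
  set v' : ℂ → ℂ := fun y => if dist y a < r then v y else e (ch y) y with hv'
  have hvin : ∀ w : ℂ, dist w a < r → v' w = v w := by
    intro w hw; rw [hv']; simp only [if_pos hw]
  have hvout : ∀ w : ℂ, ¬ dist w a < r → v' w = e (ch w) w := by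
    intro w hw; rw [hv']; simp only [if_neg hw]
  have hchout : ∀ w : ℂ, ¬ dist w a < r → dist w a < r + ε' →
      ch w ∈ t ∧ w ∈ ball (ch w) (δ (ch w) / 2) := by
    intro w hw1 hw2
    push_neg at hw1
    exact hchspec w (hC1 w (by linarith) hw2)
  refine ⟨ε', hε'pos, v', ?_, ?_, ?_⟩
  · -- differentiability
    intro z hz
    rw [mem_ball] at hz
    apply DifferentiableAt.differentiableWithinAt
    by_cases hzin : dist z a < r
    · have heq : v' =ᶠ[nhds z] v := by
        filter_upwards [ball_mem_nhds z (by linarith : (0:ℝ) < r - dist z a)] with w hw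
        rw [mem_ball] at hw
        have hd := dist_triangle w z a
        exact hvin w (by linarith)
      exact heq.differentiableAt_iff.mpr
        (hv.1.differentiableAt (isOpen_ball.mem_nhds (mem_ball.mpr hzin)))
    · obtain ⟨hcht, hchb⟩ := hchout z hzin hz
      push_neg at hzin
      set x₀ := ch z with hx₀
      have hx₀s := hts hcht
      have hδ₀ := (hδ x₀ hx₀s).1
      set s := min ε' (δ x₀ / 8) with hs
      have hspos : 0 < s := lt_min hε'pos (by linarith)
      have hN : ball z s ∩ ball a (r + ε') ∈ nhds z :=
        inter_mem (ball_mem_nhds z hspos) (isOpen_ball.mem_nhds (mem_ball.mpr hz))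
      have hkey : ∀ w ∈ ball z s ∩ ball a (r + ε'), v' w = e x₀ w := by
        rintro w ⟨hw1, hw2⟩
        rw [mem_ball] at hw1 hw2
        rw [mem_ball] at hchb
        have hwx₀ : dist w x₀ < 3 * δ x₀ / 4 := by
          have hd := dist_triangle w z x₀
          have h1 : s ≤ δ x₀ / 8 := min_le_right _ _
          linarith
        by_cases hwin : dist w a < r
        · rw [hvin w hwin]
          exact heeq x₀ hx₀s ⟨mem_ball.mpr (by linarith), mem_ball.mpr hwin⟩
        · rw [hvout w hwin]
          obtain ⟨hct, hcb⟩ := hchout w hwin (by linarith)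
          rw [mem_ball] at hcb
          refine hC3 (ch w) hct x₀ hcht w ?_ ?_ (by linarith)
          · have := (hδ (ch w) (hts hct)).1
            exact mem_ball.mpr (by linarith)
          · exact mem_ball.mpr hwx₀
      have heq : v' =ᶠ[nhds z] e x₀ := by
        filter_upwards [hN] with w hw
        exact hkey w hw
      refine heq.differentiableAt_iff.mpr
        ((hediff x₀ hx₀s).differentiableAt (isOpen_ball.mem_nhds ?_))
      rw [mem_ball] at hchb ⊢
      linarith
  · -- section property
    intro z hz
    rw [mem_ball] at hz
    by_cases hzin : dist z a < r
    · rw [hvin z hzin]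
      exact hv.2.1 z (mem_ball.mpr hzin)
    · rw [hvout z hzin]
      obtain ⟨hct, hcb⟩ := hchout z hzin hz
      refine hesec (ch z) (hts hct) z ?_
      rw [mem_ball] at hcb ⊢
      have := (hδ (ch z) (hts hct)).1
      linarith
  · -- anchor
    rw [hvin a (by rw [dist_self]; exact hr0), hv.2.2]


lemma isSec_mono {f F : ℂ → ℂ} {a e₀ : ℂ} {r₁ r₂ : ℝ} {v : ℂ → ℂ}
    (h12 : r₁ ≤ r₂) (hv : IsSec f F a e₀ r₂ v) : IsSec f F a e₀ r₁ v :=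
  ⟨hv.1.mono (ball_subset_ball h12), fun x hx => hv.2.1 x (ball_subset_ball h12 hx), hv.2.2⟩

lemma sec_noncrit {f F : ℂ → ℂ} {a e₀ : ℂ} {ρ : ℝ}
    (hcrit : ∀ y ∈ ball a ρ, y ≠ a → ∀ z : ℂ, f z = F y → deriv f z ≠ 0)
    (he₀' : deriv f e₀ ≠ 0)
    {r : ℝ} (hrρ : r ≤ ρ) {v : ℂ → ℂ} (hv : IsSec f F a e₀ r v) :
    ∀ z ∈ ball a r, deriv f (v z) ≠ 0 := by
  intro z hz
  by_cases hza : z = a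
  · rw [hza, hv.2.2]; exact he₀'
  · exact hcrit z (ball_subset_ball hrρ hz) hza _ (hv.2.1 z hz)

lemma sec_unique {f F : ℂ → ℂ} {a e₀ : ℂ} {ρ : ℝ} (hf : Differentiable ℂ f)
    (hcrit : ∀ y ∈ ball a ρ, y ≠ a → ∀ z : ℂ, f z = F y → deriv f z ≠ 0)
    (he₀' : deriv f e₀ ≠ 0)
    {r₁ r₂ : ℝ} {v₁ v₂ : ℂ → ℂ} (h1 : 0 < r₁) (h12 : r₁ ≤ r₂) (h2ρ : r₂ ≤ ρ)
    (hv₁ : IsSec f F a e₀ r₁ v₁) (hv₂ : IsSec f F a e₀ r₂ v₂) :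
    Set.EqOn v₁ v₂ (ball a r₁) := by
  have hv₂' := isSec_mono h12 hv₂
  exact sections_eqOn hf isOpen_ball (convex_ball a r₁).isPreconnected
    hv₁.1.continuousOn hv₂'.1.continuousOn hv₁.2.1 hv₂'.2.1
    (sec_noncrit hcrit he₀' (le_trans h12 h2ρ) hv₁)
    (mem_ball_self h1) (hv₁.2.2.trans hv₂.2.2.symm)

/-- Main continuation lemma: a holomorphic `F` on a ball admits a global holomorphic
section of `f` provided `F` takes no critical value of `f` away from the center. -/
lemma continuation {f F : ℂ → ℂ} {a e₀ : ℂ} {ρ : ℝ} (hf : Differentiable ℂ f)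
    (hb : ∀ K : ℝ, ∃ R : ℝ, ∀ z : ℂ, R ≤ ‖z‖ → K ≤ ‖f z‖)
    (hρ : 0 < ρ) (hF : DifferentiableOn ℂ F (ball a ρ))
    (he₀ : f e₀ = F a) (he₀' : deriv f e₀ ≠ 0)
    (hcrit : ∀ y ∈ ball a ρ, y ≠ a → ∀ z : ℂ, f z = F y → deriv f z ≠ 0) :
    ∃ v : ℂ → ℂ, IsSec f F a e₀ ρ v := by
  classical
  -- seed
  obtain ⟨V, U, σ, hVopen, hUopen, heV, heU, hinj, hσV, hσsec, hσe, hσdiff, hVnc⟩ :=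
    loc_inv hf he₀'
  have hFc : ContinuousAt F a := hF.continuousOn.continuousAt
    (isOpen_ball.mem_nhds (mem_ball_self hρ))
  have hFU : F ⁻¹' U ∈ nhds a := hFc.preimage_mem_nhds (hUopen.mem_nhds (he₀ ▸ heU))
  obtain ⟨δ₁, hδ₁pos, hδ₁⟩ := Metric.mem_nhds_iff.mp hFU
  set r₀ := min δ₁ ρ with hr₀
  have hr₀pos : 0 < r₀ := lt_min hδ₁pos hρ
  have hr₀ρ : r₀ ≤ ρ := min_le_right _ _
  have hseed : IsSec f F a e₀ r₀ (σ ∘ F) := by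
    refine ⟨?_, ?_, ?_⟩
    · exact hσdiff.comp (hF.mono (ball_subset_ball hr₀ρ))
        (fun z hz => hδ₁ (ball_subset_ball (min_le_left _ _) hz))
    · exact fun z hz => hσsec _ (hδ₁ (ball_subset_ball (min_le_left _ _) hz))
    · rw [Function.comp_apply, ← he₀, hσe]
  set A := {s : ℝ | 0 < s ∧ s ≤ ρ ∧ ∃ v, IsSec f F a e₀ s v} with hA
  have hAne : A.Nonempty := ⟨r₀, hr₀pos, hr₀ρ, σ ∘ F, hseed⟩
  have hAbdd : BddAbove A := ⟨ρ, fun s hs => hs.2.1⟩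
  set R := sSup A with hR
  have hRpos : 0 < R := lt_of_lt_of_le hr₀pos (le_csSup hAbdd ⟨hr₀pos, hr₀ρ, σ ∘ F, hseed⟩)
  have hRρ : R ≤ ρ := csSup_le hAne (fun s hs => hs.2.1)
  have hGoodlt : ∀ s : ℝ, 0 < s → s < R → ∃ v, IsSec f F a e₀ s v := by
    intro s hs0 hsR
    obtain ⟨s', hs'A, hss'⟩ := exists_lt_of_lt_csSup hAne hsR
    exact ⟨hs'A.2.2.choose, isSec_mono hss'.le hs'A.2.2.choose_spec⟩
  -- the union section at radius R
  set vv : ℝ → ℂ → ℂ := fun s => if h : ∃ v, IsSec f F a e₀ s v then h.choose else 0 with hvv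
  have hvvsec : ∀ s : ℝ, (∃ v, IsSec f F a e₀ s v) → IsSec f F a e₀ s (vv s) := by
    intro s hs
    rw [hvv]; simp only [dif_pos hs]; exact hs.choose_spec
  set W : ℂ → ℂ := fun x => vv ((dist x a + R) / 2) x with hW
  have hrx : ∀ x ∈ ball a R, dist x a < (dist x a + R) / 2 ∧ 0 < (dist x a + R) / 2 ∧
      (dist x a + R) / 2 < R := by
    intro x hx
    rw [mem_ball] at hx
    have := dist_nonneg (x := x) (y := a)
    exact ⟨by linarith, by linarith, by linarith⟩
  have hWsec : ∀ x ∈ ball a R, vv ((dist x a + R) / 2) x = W x := fun x _ => rfl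
  have hWsecs : ∀ s : ℝ, 0 < s → s < R → Set.EqOn W (vv s) (ball a s) := by
    intro s hs0 hsR x hx
    have hxR : x ∈ ball a R := ball_subset_ball hsR.le hx
    obtain ⟨hd1, hd2, hd3⟩ := hrx x hxR
    have hsec1 := hvvsec _ (hGoodlt _ hd2 hd3)
    have hsec2 := hvvsec _ (hGoodlt _ hs0 hsR)
    rcases le_total ((dist x a + R) / 2) s with hle | hle
    · exact sec_unique hf hcrit he₀' hd2 hle (le_trans hsR.le hRρ) hsec1 hsec2
        (mem_ball.mpr hd1)
    · exact (sec_unique hf hcrit he₀' hs0 hle (le_trans hd3.le hRρ) hsec2 hsec1 hx).symm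
  have hWIsSec : IsSec f F a e₀ R W := by
    refine ⟨?_, ?_, ?_⟩
    · intro x hx
      obtain ⟨hd1, hd2, hd3⟩ := hrx x hx
      set s := (dist x a + R) / 2 with hs
      have hxs : x ∈ ball a s := mem_ball.mpr hd1
      have heq : W =ᶠ[nhds x] vv s := by
        filter_upwards [isOpen_ball.mem_nhds hxs] with w hw
        exact hWsecs s hd2 hd3 hw
      exact (heq.differentiableAt_iff.mpr
        ((hvvsec s (hGoodlt s hd2 hd3)).1.differentiableAt
          (isOpen_ball.mem_nhds hxs))).differentiableWithinAt
    · intro x hx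
      obtain ⟨hd1, hd2, hd3⟩ := hrx x hx
      exact (hvvsec _ (hGoodlt _ hd2 hd3)).2.1 x (mem_ball.mpr hd1)
    · have ha : a ∈ ball a R := mem_ball_self hRpos
      have : W a = vv ((dist a a + R) / 2) a := rfl
      rw [this]
      have h0 : (0:ℝ) < (dist a a + R) / 2 := by
        rw [dist_self]; linarith
      have h1 : (dist a a + R) / 2 < R := by
        rw [dist_self]; linarith
      exact (hvvsec _ (hGoodlt _ h0 h1)).2.2
  -- R must equal ρ
  by_cases hRρ' : R < ρ
  · exfalso
    obtain ⟨ε, hεpos, v', hv'⟩ := ext_radius hf hb hF hcrit hRpos hRρ' hWIsSec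
    have hmem : min (R + ε) ρ ∈ A := by
      refine ⟨lt_min (by linarith) hρ, min_le_right _ _, v',
        isSec_mono (min_le_left _ _) hv'⟩
    have := le_csSup hAbdd hmem
    rw [← hR] at this
    have h2 : R < min (R + ε) ρ := lt_min (by linarith) hRρ'
    linarith
  · push_neg at hRρ'
    have : R = ρ := le_antisymm hRρ hRρ'
    exact ⟨W, this ▸ hWIsSec⟩


/-- derivative of an iterate at a fixed point -/
lemma deriv_iterate_fixed {f : ℂ → ℂ} (hf : Differentiable ℂ f) {a : ℂ} (ha : f a = a) :
    ∀ n : ℕ, deriv (f^[n]) a = (deriv f a) ^ n := by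
  intro n
  induction n with
  | zero => simp [Function.iterate_zero]
  | succ n ih =>
    rw [Function.iterate_succ']
    rw [deriv_comp a (hf _) ((hf.iterate n) _)]
    rw [Function.iterate_fixed ha, ih, pow_succ]
    ring

/-- The core lemma (Fatou): an entire map with escape property and a geometrically
attracting fixed point has a critical point whose orbit converges to the fixed point
without ever hitting it. -/
lemma core {f : ℂ → ℂ} (hf : Differentiable ℂ f)
    (hesc : ∃ R₀ : ℝ, 0 < R₀ ∧ ∀ z : ℂ, R₀ ≤ ‖z‖ → ‖z‖ + 1 ≤ ‖f z‖)
    {a : ℂ} (ha : f a = a) (hl1 : ‖deriv f a‖ < 1) (hl0 : deriv f a ≠ 0) :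
    ∃ c : ℂ, deriv f c = 0 ∧ Tendsto (fun n => f^[n] c) atTop (nhds a) ∧
      ∀ m : ℕ, 1 ≤ m → f^[m] c ≠ a := by
  classical
  obtain ⟨R₀, hR₀pos, hR₀⟩ := hesc
  set lam := deriv f a with hlam
  set k : ℝ := (1 + ‖lam‖) / 2 with hk
  have hkl : ‖lam‖ < k := by rw [hk]; linarith
  have hk1 : k < 1 := by rw [hk]; linarith
  have hk0 : 0 < k := by rw [hk]; positivity
  -- small ball with derivative bound
  have hU₁ : {z : ℂ | ‖deriv f z‖ < k} ∈ nhds a :=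
    (continuous_deriv_entire hf).norm.continuousAt (Iio_mem_nhds hkl)
  obtain ⟨δ₁, hδ₁pos, hδ₁⟩ := Metric.mem_nhds_iff.mp hU₁
  -- injectivity neighbourhood
  obtain ⟨V, U, σ, hVopen, hUopen, haV, -, hinj, -, -, -, -, -⟩ := loc_inv hf hl0
  obtain ⟨δ₂, hδ₂pos, hδ₂⟩ := Metric.mem_nhds_iff.mp (hVopen.mem_nhds haV)
  set ρ : ℝ := min (δ₁ / 2) (δ₂ / 2) with hρdef
  have hρpos : 0 < ρ := lt_min (by linarith) (by linarith)
  have hρV : closedBall a ρ ⊆ V := fun z hz => hδ₂ (lt_of_le_of_lt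
    (mem_closedBall.mp hz) (lt_of_le_of_lt (min_le_right _ _) (by linarith)))
  have hρd : ∀ z ∈ closedBall a ρ, ‖deriv f z‖ ≤ k := fun z hz =>
    (hδ₁ (lt_of_le_of_lt (mem_closedBall.mp hz)
      (lt_of_le_of_lt (min_le_left _ _) (by linarith)))).le
  -- contraction
  have hcontr : ∀ z ∈ closedBall a ρ, dist (f z) a ≤ k * dist z a := by
    intro z hz
    have := Convex.norm_image_sub_le_of_norm_hasDerivWithin_le
      (f := f) (f' := deriv f) (s := closedBall a ρ)
      (fun x _ => (hf x).hasDerivAt.hasDerivWithinAt) hρd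
      (convex_closedBall a ρ) (mem_closedBall_self hρpos.le) hz
    rw [ha] at this
    simpa [dist_eq_norm] using this
  have hinv : ∀ z ∈ closedBall a ρ, f z ∈ closedBall a ρ := by
    intro z hz
    rw [mem_closedBall]
    calc dist (f z) a ≤ k * dist z a := hcontr z hz
    _ ≤ 1 * ρ := by
        apply mul_le_mul hk1.le (mem_closedBall.mp hz) dist_nonneg zero_le_one
    _ = ρ := one_mul ρ
  have hiter : ∀ n : ℕ, ∀ z ∈ closedBall a ρ,
      f^[n] z ∈ closedBall a ρ ∧ dist (f^[n] z) a ≤ k ^ n * dist z a := by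
    intro n
    induction n with
    | zero => intro z hz; simpa using hz
    | succ n ih =>
      intro z hz
      obtain ⟨h1, h2⟩ := ih z hz
      rw [Function.iterate_succ_apply']
      refine ⟨hinv _ h1, ?_⟩
      calc dist (f (f^[n] z)) a ≤ k * dist (f^[n] z) a := hcontr _ h1
      _ ≤ k * (k ^ n * dist z a) := by
          apply mul_le_mul_of_nonneg_left h2 hk0.le
      _ = k ^ (n + 1) * dist z a := by ring
  have htend : ∀ z ∈ closedBall a ρ, Tendsto (fun n => f^[n] z) atTop (nhds a) := by
    intro z hz
    rw [tendsto_iff_dist_tendsto_zero]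
    apply squeeze_zero (fun n => dist_nonneg) (fun n => (hiter n z hz).2)
    have h1 : Tendsto (fun n : ℕ => k ^ n) atTop (nhds 0) :=
      tendsto_pow_atTop_nhds_zero_of_lt_one hk0.le hk1
    simpa using h1.mul_const (dist z a)
  have huniq : ∀ z ∈ closedBall a ρ, f z = a → z = a := by
    intro z hz hfz
    exact hinj (hρV hz) (hρV (mem_closedBall_self hρpos.le)) (by rw [hfz, ha])
  have hnever : ∀ j : ℕ, ∀ z ∈ closedBall a ρ, f^[j] z = a → z = a := by
    intro j
    induction j with
    | zero => intro z _ h; simpa using h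
    | succ j ih =>
      intro z hz h
      rw [Function.iterate_succ_apply'] at h
      exact ih z hz (huniq _ (hiter j z hz).1 h)
  -- escape bounds
  set R₁ : ℝ := max R₀ (‖a‖ + ρ + 1) with hR₁
  have hR₁R₀ : R₀ ≤ R₁ := le_max_left _ _
  have horb : ∀ z : ℂ, R₁ ≤ ‖z‖ → ∀ j : ℕ, R₁ ≤ ‖f^[j] z‖ := by
    intro z hz j
    induction j with
    | zero => simpa using hz
    | succ j ih =>
      rw [Function.iterate_succ_apply']
      have := hR₀ _ (le_trans hR₁R₀ ih)
      linarith
  -- dichotomy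
  by_cases hOb : ∃ (n : ℕ) (h : ℂ → ℂ), DifferentiableOn ℂ h (ball a ρ) ∧
      (∀ x ∈ ball a ρ, f^[n] (h x) = x) ∧ h a = a ∧
      ∃ y ∈ ball a ρ, y ≠ a ∧ ∃ c : ℂ, deriv f c = 0 ∧ f c = h y
  · -- the obstruction yields the desired critical point
    obtain ⟨n, h, hdiff, hsec, hanch, y, hy, hya, c, hc0, hfc⟩ := hOb
    have horbc : f^[n + 1] c = y := by
      rw [Function.iterate_succ_apply, hfc, hsec y hy]
    have hyc : y ∈ closedBall a ρ := ball_subset_closedBall hy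
    refine ⟨c, hc0, ?_, ?_⟩
    · have h1 : Tendsto (fun m => f^[m + (n + 1)] c) atTop (nhds a) := by
        have : (fun m => f^[m + (n + 1)] c) = fun m => f^[m] y := by
          funext m
          rw [Function.iterate_add_apply, horbc]
        rw [this]
        exact htend y hyc
      exact (tendsto_add_atTop_iff_nat (n + 1)).mp h1
    · intro m hm heq
      rcases le_or_gt m n with hmn | hmn
      · -- y would be a
        have hm1 : m - 1 + 1 = m := Nat.succ_pred_eq_of_pos hm
        have h2 : f^[m - 1] (h y) = a := by
          have h2' : f^[m - 1 + 1] c = a := by rw [hm1]; exact heq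
          rw [Function.iterate_succ_apply, hfc] at h2'
          exact h2'
        have h3 : n - (m - 1) + (m - 1) = n := Nat.sub_add_cancel (by omega)
        have h4 : y = f^[n - (m-1)] (f^[m-1] (h y)) := by
          rw [← Function.iterate_add_apply, h3, hsec y hy]
        rw [h2, Function.iterate_fixed ha] at h4
        exact hya h4
      · have h2 : f^[m - (n+1)] y = a := by
          rw [← horbc, ← Function.iterate_add_apply, Nat.sub_add_cancel (by omega), heq]
        exact hya (hnever _ y hyc h2)
  · -- no obstruction: build sections of all orders, contradiction with Schwarz
    exfalso
    push_neg at hOb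
    have hSec : ∀ n : ℕ, ∃ h : ℂ → ℂ, DifferentiableOn ℂ h (ball a ρ) ∧
        (∀ x ∈ ball a ρ, f^[n] (h x) = x) ∧ h a = a := by
      intro n
      induction n with
      | zero =>
        exact ⟨id, differentiable_id.differentiableOn, fun x _ => rfl, rfl⟩
      | succ n ih =>
        obtain ⟨h, hdiff, hsec, hanch⟩ := ih
        have hcrit : ∀ y ∈ ball a ρ, y ≠ a → ∀ z : ℂ, f z = h y → deriv f z ≠ 0 := by
          intro y hy hya z hfz hz0
          exact (hOb n h hdiff hsec hanch y hy hya z hz0) hfz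
        have hb : ∀ K : ℝ, ∃ R : ℝ, ∀ z : ℂ, R ≤ ‖z‖ → K ≤ ‖f z‖ := by
          intro K
          refine ⟨max R₀ K, fun z hz => ?_⟩
          have h1 := hR₀ z (le_trans (le_max_left _ _) hz)
          have h2 : K ≤ ‖z‖ := le_trans (le_max_right _ _) hz
          linarith
        obtain ⟨v, hv⟩ := continuation hf hb hρpos hdiff
          (show f a = h a by rw [ha, hanch]) hl0 hcrit
        refine ⟨v, hv.1, ?_, hv.2.2⟩
        intro x hx
        rw [Function.iterate_succ_apply, hv.2.1 x hx, hsec x hx]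
    -- Schwarz contradiction
    set M : ℝ := R₁ + ‖a‖ with hM
    have hMpos : 0 < M := by
      have : ‖a‖ + ρ + 1 ≤ R₁ := le_max_right _ _
      have := norm_nonneg a
      rw [hM]; linarith
    have hkey : ∀ n : ℕ, (1 : ℝ) ≤ ‖lam‖ ^ n * (M / ρ) := by
      intro n
      obtain ⟨h, hdiff, hsec, hanch⟩ := hSec n
      -- value bound
      have hbound : ∀ x ∈ ball a ρ, ‖h x‖ < R₁ := by
        intro x hx
        by_contra hcon
        push_neg at hcon
        have h1 := horb (h x) hcon n
        rw [hsec x hx] at h1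
        have h2 : ‖x‖ ≤ ‖x - a‖ + ‖a‖ := by
          simpa using norm_add_le (x - a) a
        rw [mem_ball, dist_eq_norm] at hx
        have h3 : ‖a‖ + ρ + 1 ≤ R₁ := le_max_right _ _
        linarith
      have hmaps : MapsTo h (ball a ρ) (ball (h a) M) := by
        intro x hx
        rw [mem_ball, hanch, dist_eq_norm]
        calc ‖h x - a‖ ≤ ‖h x‖ + ‖a‖ := norm_sub_le _ _
        _ < R₁ + ‖a‖ := by linarith [hbound x hx]
      have hschwarz : ‖deriv h a‖ ≤ M / ρ :=
        Complex.norm_deriv_le_div_of_mapsTo_ball hdiff (hmaps.mono_right ball_subset_closedBall) hρpos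
      -- compute deriv h a
      have hder : lam ^ n * deriv h a = 1 := by
        have hev : (f^[n] ∘ h) =ᶠ[nhds a] id := by
          filter_upwards [isOpen_ball.mem_nhds (mem_ball_self hρpos)] with x hx
          exact hsec x hx
        have h1 : deriv (f^[n] ∘ h) a = deriv (id : ℂ → ℂ) a := hev.deriv_eq
        rw [deriv_id'] at h1
        rw [deriv_comp a ((hf.iterate n) _)
          (hdiff.differentiableAt (isOpen_ball.mem_nhds (mem_ball_self hρpos)))] at h1
        rw [hanch, deriv_iterate_fixed hf ha n] at h1
        exact h1
      have h2 : ‖lam‖ ^ n * ‖deriv h a‖ = 1 := by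
        rw [← norm_pow, ← norm_mul, hder, norm_one]
      calc (1:ℝ) = ‖lam‖ ^ n * ‖deriv h a‖ := h2.symm
      _ ≤ ‖lam‖ ^ n * (M / ρ) := by
          apply mul_le_mul_of_nonneg_left hschwarz (by positivity)
    obtain ⟨n, hn⟩ := exists_pow_lt_of_lt_one (show (0:ℝ) < ρ / M by positivity) hl1
    have h1 := hkey n
    have h2 : (ρ / M) * (M / ρ) = 1 := by field_simp
    have h3 : ‖lam‖ ^ n * (M / ρ) < (ρ / M) * (M / ρ) := by
      apply mul_lt_mul_of_pos_right hn (by positivity)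
    rw [hlam] at *
    rw [h2] at h3
    linarith


/-- A point whose `q`-step orbit converges to `w` but never reaches `w`
is not (pre)periodic. -/
lemma no_preper {g : ℂ → ℂ} {x w : ℂ} {q : ℕ} (hq : 1 ≤ q)
    (htend : Tendsto (fun j : ℕ => g^[j * q] x) atTop (nhds w))
    (hne : ∀ j : ℕ, 1 ≤ j → g^[j * q] x ≠ w) :
    ¬ ∃ m n : ℕ, m < n ∧ g^[m] x = g^[n] x := by
  rintro ⟨a, b, hab, heq⟩
  set p := b - a with hp
  have hp1 : 1 ≤ p := by omega
  have hper : ∀ i : ℕ, a ≤ i → g^[i + p] x = g^[i] x := by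
    intro i hi
    have h1 : i + p = (i - a) + (a + p) := by omega
    have h2 : i = (i - a) + a := by omega
    have h3 : a + p = b := by omega
    rw [h1, Function.iterate_add_apply, h3, ← heq, ← Function.iterate_add_apply, ← h2]
  have hper2 : ∀ t : ℕ, ∀ i : ℕ, a ≤ i → g^[i + t * p] x = g^[i] x := by
    intro t
    induction t with
    | zero => intro i _; simp
    | succ t ih =>
      intro i hi
      have h1 : i + (t + 1) * p = (i + t * p) + p := by ring
      rw [h1, hper _ (by omega), ih i hi]
  set j₀ := a + 1 with hj₀
  have hconst : ∀ t : ℕ, g^[(j₀ + t * p) * q] x = g^[j₀ * q] x := by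
    intro t
    have h1 : (j₀ + t * p) * q = j₀ * q + (t * q) * p := by ring
    rw [h1]
    exact hper2 (t * q) (j₀ * q) (by
      have : j₀ ≤ j₀ * q := Nat.le_mul_of_pos_right _ (by omega)
      omega)
  have hmono : Tendsto (fun t : ℕ => j₀ + t * p) atTop atTop := by
    apply tendsto_atTop_mono (f := fun t : ℕ => t)
    · intro t
      have : t * 1 ≤ t * p := Nat.mul_le_mul_left t hp1
      omega
    · exact tendsto_id
  have h2 : Tendsto (fun t : ℕ => g^[(j₀ + t * p) * q] x) atTop (nhds w) :=
    htend.comp hmono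
  have h3 : Tendsto (fun _ : ℕ => g^[j₀ * q] x) atTop (nhds w) := by
    rw [show (fun _ : ℕ => g^[j₀ * q] x) = fun t : ℕ => g^[(j₀ + t * p) * q] x from
      funext fun t => (hconst t).symm]
    exact h2
  exact hne j₀ (by omega) (tendsto_nhds_unique tendsto_const_nhds h3)

/-- chain rule for iterates -/
lemma deriv_iterate {g : ℂ → ℂ} (hg : Differentiable ℂ g) (n : ℕ) (z : ℂ) :
    deriv (g^[n]) z = ∏ i ∈ Finset.range n, deriv g (g^[i] z) := by
  induction n with
  | zero => simp
  | succ n ih =>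
    rw [Function.iterate_succ']
    rw [deriv_comp z (hg _) ((hg.iterate n) _)]
    rw [ih, Finset.prod_range_succ]
    ring

/-- escape rate for a polynomial of degree 3 -/
lemma escape_cubic {P : Polynomial ℂ} (hdeg : P.natDegree = 3) :
    ∃ R₀ : ℝ, 0 < R₀ ∧ ∀ z : ℂ, R₀ ≤ ‖z‖ → ‖z‖ + 1 ≤ ‖P.eval z‖ := by
  set Q := P.divX with hQ
  have hQdeg : Q.natDegree = 2 := by
    rw [hQ, Polynomial.natDegree_divX_eq_natDegree_tsub_one, hdeg]
  have hQdeg' : 0 < Q.degree := by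
    apply Polynomial.natDegree_pos_iff_degree_pos.mp
    omega
  have htend : Tendsto (fun z : ℂ => ‖Q.eval z‖) (Bornology.cobounded ℂ) atTop :=
    Polynomial.tendsto_norm_atTop Q hQdeg' tendsto_norm_cobounded_atTop
  have hev : ∀ᶠ z : ℂ in Bornology.cobounded ℂ, ‖P.coeff 0‖ + 2 ≤ ‖Q.eval z‖ :=
    htend.eventually_ge_atTop _
  rw [← comap_norm_atTop] at hev
  rw [eventually_comap] at hev
  obtain ⟨R, hR⟩ := eventually_atTop.mp hev
  refine ⟨max R 1, lt_of_lt_of_le zero_lt_one (le_max_right _ _), ?_⟩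
  intro z hz
  have hz1 : 1 ≤ ‖z‖ := le_trans (le_max_right _ _) hz
  have hzR : R ≤ ‖z‖ := le_trans (le_max_left _ _) hz
  have hQz : ‖P.coeff 0‖ + 2 ≤ ‖Q.eval z‖ := hR ‖z‖ hzR z rfl
  have heval : P.eval z = Q.eval z * z + P.coeff 0 := by
    conv_lhs => rw [← P.divX_mul_X_add]
    simp [hQ]
  rw [heval]
  have h0 : ‖Q.eval z * z‖ ≤ ‖Q.eval z * z + P.coeff 0‖ + ‖P.coeff 0‖ := by
    have h := norm_add_le (Q.eval z * z + P.coeff 0) (-(P.coeff 0))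
    simpa using h
  have h1 : ‖Q.eval z‖ * ‖z‖ - ‖P.coeff 0‖ ≤ ‖Q.eval z * z + P.coeff 0‖ := by
    rw [norm_mul] at h0; linarith
  nlinarith [norm_nonneg (P.coeff 0), norm_nonneg (Q.eval z)]


end Fatou15

open Fatou15 in
/-- A cubic polynomial with an attracting (geometric) fixed point and a disjoint
attracting (geometric) periodic cycle has two distinct non-preperiodic critical points,
one attracted to the fixed point, the other to the cycle. -/
theorem stmt_15
    (P : Polynomial ℂ) (hdeg : P.natDegree = 3)
    (g : ℂ → ℂ) (hg : ∀ z, g z = P.eval z)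
    (z₀ : ℂ) (hfix : g z₀ = z₀)
    (hattr : ‖deriv g z₀‖ < 1) (hgeom : deriv g z₀ ≠ 0)
    (q : ℕ) (hq : 1 ≤ q) (w : ℂ) (hcycle : g^[q] w = w)
    (hdisj : ∀ i < q, g^[i] w ≠ z₀)
    (hattr' : ‖deriv (g^[q]) w‖ < 1) (hgeom' : deriv (g^[q]) w ≠ 0) :
    ∃ c c' : ℂ, c ≠ c' ∧ deriv g c = 0 ∧ deriv g c' = 0 ∧
      (¬ ∃ m n : ℕ, m < n ∧ g^[m] c = g^[n] c) ∧
      (¬ ∃ m n : ℕ, m < n ∧ g^[m] c' = g^[n] c') ∧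
      Tendsto (fun n : ℕ => g^[n] c) atTop (nhds z₀) ∧
      ∃ i < q, Tendsto (fun n : ℕ => g^[n * q] c') atTop (nhds (g^[i] w)) := by
  have hgfun : g = fun z => P.eval z := funext hg
  have hgdiff : Differentiable ℂ g := by
    rw [hgfun]; exact P.differentiable
  obtain ⟨R₀, hR₀pos, hR₀⟩ : ∃ R₀ : ℝ, 0 < R₀ ∧
      ∀ z : ℂ, R₀ ≤ ‖z‖ → ‖z‖ + 1 ≤ ‖g z‖ := by
    obtain ⟨R₀, h1, h2⟩ := escape_cubic hdeg
    exact ⟨R₀, h1, fun z hz => by rw [hg]; exact h2 z hz⟩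
  have horb : ∀ j : ℕ, ∀ z : ℂ, R₀ ≤ ‖z‖ → R₀ ≤ ‖g^[j] z‖ ∧ ‖z‖ ≤ ‖g^[j] z‖ := by
    intro j
    induction j with
    | zero => intro z hz; exact ⟨hz, le_rfl⟩
    | succ j ih =>
      intro z hz
      obtain ⟨h1, h2⟩ := ih z hz
      rw [Function.iterate_succ_apply']
      have h3 := hR₀ _ h1
      exact ⟨by linarith, by linarith⟩
  have hescG : ∃ R₀' : ℝ, 0 < R₀' ∧ ∀ z : ℂ, R₀' ≤ ‖z‖ → ‖z‖ + 1 ≤ ‖g^[q] z‖ := by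
    refine ⟨R₀, hR₀pos, ?_⟩
    intro z hz
    obtain ⟨q', rfl⟩ : ∃ q', q = q' + 1 := ⟨q - 1, by omega⟩
    rw [Function.iterate_succ_apply']
    have h1 := horb q' z hz
    have h2 := hR₀ _ h1.1
    linarith
  have hl1 : ‖deriv g z₀‖ < 1 := by exact hattr
  have hl1' : ‖deriv (g^[q]) w‖ < 1 := by exact hattr'
  obtain ⟨c, hc0, hctend, hcne⟩ := core hgdiff ⟨R₀, hR₀pos, hR₀⟩ hfix hl1 hgeom
  have hGdiff : Differentiable ℂ (g^[q]) := hgdiff.iterate q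
  obtain ⟨chat, hchat0, hchattend, hchatne⟩ := core hGdiff hescG hcycle hl1' hgeom'
  -- a critical point of g along the finite orbit of chat
  obtain ⟨s, hs, hs0⟩ := Finset.prod_eq_zero_iff.mp
    (by rw [← deriv_iterate hgdiff q chat]; exact hchat0)
  have hsq : s < q := Finset.mem_range.mp hs
  set c' := g^[s] chat with hc'
  have hGiter : ∀ j : ℕ, g^[j * q] chat = (g^[q])^[j] chat := by
    intro j
    rw [← Function.iterate_mul, Nat.mul_comm]
  have hc'orb : ∀ j : ℕ, g^[j * q] c' = g^[s] ((g^[q])^[j] chat) := by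
    intro j
    rw [hc', ← Function.iterate_add_apply, ← hGiter j, ← Function.iterate_add_apply,
      show j * q + s = s + j * q from Nat.add_comm _ _]
  have htendc' : Tendsto (fun j : ℕ => g^[j * q] c') atTop (nhds (g^[s] w)) := by
    have hcont : Continuous (g^[s]) := (hgdiff.iterate s).continuous
    have h1 : Tendsto (fun j : ℕ => g^[s] ((g^[q])^[j] chat)) atTop (nhds (g^[s] w)) :=
      (hcont.tendsto w).comp hchattend
    rw [show (fun j : ℕ => g^[j * q] c') = fun j : ℕ => g^[s] ((g^[q])^[j] chat) from
      funext hc'orb]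
    exact h1
  have htendchat : Tendsto (fun j : ℕ => g^[j * q] chat) atTop (nhds w) := by
    rw [show (fun j : ℕ => g^[j * q] chat) = fun j => (g^[q])^[j] chat from funext hGiter]
    exact hchattend
  have hnechat : ∀ j : ℕ, 1 ≤ j → g^[j * q] chat ≠ w := by
    intro j hj
    rw [hGiter]
    exact hchatne j hj
  have hnp_c : ¬ ∃ m n : ℕ, m < n ∧ g^[m] c = g^[n] c := by
    apply no_preper (q := 1) (w := z₀) le_rfl
    · simpa [mul_one] using hctend
    · intro j hj; simpa [mul_one] using hcne j hj
  have hnp_c' : ¬ ∃ m n : ℕ, m < n ∧ g^[m] c' = g^[n] c' := by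
    rintro ⟨m, n, hmn, heq⟩
    refine no_preper hq htendchat hnechat ⟨m + s, n + s, by omega, ?_⟩
    rw [Function.iterate_add_apply, Function.iterate_add_apply]
    exact heq
  have hdist : c ≠ c' := by
    intro hcc
    have hmul : Tendsto (fun j : ℕ => j * q) atTop atTop := by
      apply tendsto_atTop_mono (f := fun j : ℕ => j)
      · intro j; exact Nat.le_mul_of_pos_right j (by omega)
      · exact tendsto_id
    have h1 : Tendsto (fun j : ℕ => g^[j * q] c) atTop (nhds z₀) := hctend.comp hmul
    rw [hcc] at h1
    exact hdisj s hsq (tendsto_nhds_unique htendc' h1)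
  exact ⟨c, c', hdist, hc0, hs0, hnp_c, hnp_c', hctend, s, hsq, htendc'⟩
end
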